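/- With the notation of the previous statement (I₊, I₋ nonempty, ρ₊, ρ₋, c = (ρ₊−ρ₋)/2, d = (ρ₊+ρ₋)/2), the decrease in mean squared error satisfies (1/m)·Σᵢ yᵢ² − (1/m)·Σᵢ (yᵢ − c·sign(w·xᵢ+b) − d)² = (1/m)·[ (Σ_{i∈I₊} yᵢ)²/|I₊| + (Σ_{i∈I₋} yᵢ)²/|I₋| ] ≥ 0, and this quantity equals (c+d)(c−d) = ρ₊·(−ρ₋) whenever Σᵢ yᵢ = 0. -/

import Mathlib

/-!
On each side of the hyperplane the new prediction `c * s i + d` equals the mean `ρ` of the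
residuals on that side, and replacing the values of a block by their mean lowers the sum of
squares by exactly `(∑ y)² / |I|`. If the residuals sum to zero, then `|I₊| ρ₊ = -|I₋| ρ₋`, so
`|I₊| ρ₊² + |I₋| ρ₋² = -(|I₊| + |I₋|) ρ₊ ρ₋ = -m ρ₊ ρ₋`.
-/

/-- The sign function: +1 if the input is nonnegative, -1 otherwise. -/
noncomputable def sgn (z : ℝ) : ℝ := if 0 ≤ z then 1 else -1

open Finset

lemma sgn_eq_one_or_eq_neg_one (z : ℝ) : sgn z = 1 ∨ sgn z = -1 := by
  unfold sgn
  split_ifs <;> simp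

namespace Finset

variable {ι : Type*}

lemma sum_filter_eq_one_add_sum_filter_eq_neg_one [Fintype ι] {s : ι → ℝ}
    (hs : ∀ i, s i = 1 ∨ s i = -1) (g : ι → ℝ) :
    ∑ i with s i = 1, g i + ∑ i with s i = -1, g i = ∑ i, g i := by
  have hneg : ∀ i ∈ univ, s i = -1 ↔ ¬s i = 1 := fun i _ => by
    rcases hs i with h | h <;> norm_num [h]
  rw [filter_congr hneg, sum_filter_add_sum_filter_not]

variable (s : Finset ι) (f : ι → ℝ)

lemma card_mul_sum_div_card : (#s : ℝ) * ((∑ i ∈ s, f i) / #s) = ∑ i ∈ s, f i := by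
  rw [← expect_eq_sum_div_card, card_mul_expect]

lemma sq_sum_div_card : (∑ i ∈ s, f i) ^ 2 / #s = #s * ((∑ i ∈ s, f i) / #s) ^ 2 := by
  rcases eq_or_ne (#s : ℝ) 0 with h | h
  · simp [h]
  · field_simp

lemma sum_sq_sub_sum_sq_sub_mean :
    ∑ i ∈ s, f i ^ 2 - ∑ i ∈ s, (f i - (∑ j ∈ s, f j) / #s) ^ 2 =
      (∑ i ∈ s, f i) ^ 2 / #s := by
  set μ := (∑ j ∈ s, f j) / #s
  have hexpand :
      ∑ i ∈ s, (f i - μ) ^ 2 = ∑ i ∈ s, f i ^ 2 - 2 * μ * ∑ i ∈ s, f i + #s * μ ^ 2 := by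
    simp only [sub_sq, sum_add_distrib, sum_sub_distrib, ← sum_mul, ← mul_sum, sum_const,
      nsmul_eq_mul]
    ring
  rw [hexpand, sq_sum_div_card]
  linear_combination (-2 * μ) * card_mul_sum_div_card s f

end Finset

lemma one_div_add_mul_weighted_sq_sum_eq_mul_neg {p q a b : ℝ} (hpq : p + q ≠ 0)
    (h : p * a + q * b = 0) :
    1 / (p + q) * (p * a ^ 2 + q * b ^ 2) = a * -b := by
  field_simp
  linear_combination (a + b) * h

open scoped Classical in
theorem stmt6_general (m n : ℕ) (hm : 0 < m) (x : Fin m → Fin n → ℝ) (y : Fin m → ℝ)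
    (w : Fin n → ℝ) (b : ℝ)
    (s : Fin m → ℝ) (hs : ∀ i, s i = sgn ((∑ j, w j * x i j) + b))
    (Ip Im : Finset (Fin m))
    (hIp : Ip = Finset.univ.filter (fun i => s i = 1))
    (hIm : Im = Finset.univ.filter (fun i => s i = -1))
    (ρp ρm c d : ℝ)
    (hρp : ρp = (∑ i ∈ Ip, y i) / (Ip.card : ℝ))
    (hρm : ρm = (∑ i ∈ Im, y i) / (Im.card : ℝ))
    (hc : c = (ρp - ρm) / 2) (hd : d = (ρp + ρm) / 2) :
    ((1 / m) * ∑ i, (y i) ^ 2 - (1 / m) * ∑ i, (y i - c * s i - d) ^ 2 =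
      (1 / m) * ((∑ i ∈ Ip, y i) ^ 2 / (Ip.card : ℝ) +
        (∑ i ∈ Im, y i) ^ 2 / (Im.card : ℝ))) ∧
    (0 ≤ (1 / m) * ((∑ i ∈ Ip, y i) ^ 2 / (Ip.card : ℝ) +
        (∑ i ∈ Im, y i) ^ 2 / (Im.card : ℝ))) ∧
    ((∑ i, y i) = 0 →
      (1 / m) * ∑ i, (y i) ^ 2 - (1 / m) * ∑ i, (y i - c * s i - d) ^ 2 =
        (c + d) * (c - d) ∧ (c + d) * (c - d) = ρp * (-ρm)) := by
  have hsign (i : Fin m) : s i = 1 ∨ s i = -1 := hs i ▸ sgn_eq_one_or_eq_neg_one _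
  have hsplit (g : Fin m → ℝ) : ∑ i, g i = ∑ i ∈ Ip, g i + ∑ i ∈ Im, g i := by
    rw [hIp, hIm, sum_filter_eq_one_add_sum_filter_eq_neg_one hsign]
  have hfit_p : ∀ i ∈ Ip, (y i - c * s i - d) ^ 2 = (y i - ρp) ^ 2 := fun i hi => by
    rw [hIp, mem_filter] at hi
    rw [hi.2, hc, hd]; ring
  have hfit_m : ∀ i ∈ Im, (y i - c * s i - d) ^ 2 = (y i - ρm) ^ 2 := fun i hi => by
    rw [hIm, mem_filter] at hi
    rw [hi.2, hc, hd]; ring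
  have hdecrease : (1 / m) * ∑ i, y i ^ 2 - (1 / m) * ∑ i, (y i - c * s i - d) ^ 2 =
      (1 / m) * ((∑ i ∈ Ip, y i) ^ 2 / #Ip + (∑ i ∈ Im, y i) ^ 2 / #Im) := by
    rw [← mul_sub, hsplit fun i => y i ^ 2, hsplit fun i => (y i - c * s i - d) ^ 2,
      sum_congr rfl hfit_p, sum_congr rfl hfit_m, add_sub_add_comm, hρp, hρm,
      sum_sq_sub_sum_sq_sub_mean, sum_sq_sub_sum_sq_sub_mean]
  have hcd : c + d = ρp ∧ c - d = -ρm := by constructor <;> (rw [hc, hd]; ring)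
  refine ⟨hdecrease, by positivity, fun hy => ⟨?_, by rw [hcd.1, hcd.2]⟩⟩
  have hcard : (#Ip : ℝ) + #Im = m := by simpa using (hsplit fun _ => 1).symm
  rw [hdecrease, sq_sum_div_card, sq_sum_div_card, ← hρp, ← hρm, ← hcard, hcd.1, hcd.2]
  refine one_div_add_mul_weighted_sq_sum_eq_mul_neg (hcard ▸ by exact_mod_cast hm.ne') ?_
  rw [hρp, hρm, card_mul_sum_div_card, card_mul_sum_div_card, ← hsplit, hy]

open scoped Classical in
theorem stmt6 (m n : ℕ) (hm : 0 < m) (x : Fin m → Fin n → ℝ) (y : Fin m → ℝ)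
    (w : Fin n → ℝ) (b : ℝ)
    (s : Fin m → ℝ) (hs : ∀ i, s i = sgn ((∑ j, w j * x i j) + b))
    (Ip Im : Finset (Fin m))
    (hIp : Ip = Finset.univ.filter (fun i => s i = 1))
    (hIm : Im = Finset.univ.filter (fun i => s i = -1))
    (hp : Ip.Nonempty) (hm' : Im.Nonempty)
    (ρp ρm c d : ℝ)
    (hρp : ρp = (∑ i ∈ Ip, y i) / (Ip.card : ℝ))
    (hρm : ρm = (∑ i ∈ Im, y i) / (Im.card : ℝ))
    (hc : c = (ρp - ρm) / 2) (hd : d = (ρp + ρm) / 2) :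
    ((1 / m) * ∑ i, (y i) ^ 2 - (1 / m) * ∑ i, (y i - c * s i - d) ^ 2 =
      (1 / m) * ((∑ i ∈ Ip, y i) ^ 2 / (Ip.card : ℝ) +
        (∑ i ∈ Im, y i) ^ 2 / (Im.card : ℝ))) ∧
    (0 ≤ (1 / m) * ((∑ i ∈ Ip, y i) ^ 2 / (Ip.card : ℝ) +
        (∑ i ∈ Im, y i) ^ 2 / (Im.card : ℝ))) ∧
    ((∑ i, y i) = 0 →
      (1 / m) * ∑ i, (y i) ^ 2 - (1 / m) * ∑ i, (y i - c * s i - d) ^ 2 =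
        (c + d) * (c - d) ∧ (c + d) * (c - d) = ρp * (-ρm)) :=
  stmt6_general m n hm x y w b s hs Ip Im hIp hIm ρp ρm c d hρp hρm hc hd
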